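/- arXiv:1210.2995 — 3 statements merged into one kernel-verified Lean document; each statement's English description precedes it below -/
import Mathlib

section
/- Under the identification K((t)) = ∪_{j∈ℤ} t^j K[[t]], where each subspace t^j K[[t]] is K-linearly isomorphic to the countable product K^ℕ and carries the product topology, the higher topology on K((t)) coincides with the strict inductive limit topology (the finest locally convex topology making every inclusion t^j K[[t]] ↪ K((t)) continuous). -/
/-!
Common setting: `K` is a characteristic-zero local field (a finite extension of `ℚ_p`)
with ring of integers `𝒪 = {c : K | ‖c‖ ≤ 1}`, maximal ideal `𝔭 = {c : K | ‖c‖ < 1}`,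
residue field of cardinality `q` and the absolute value normalised by `‖π‖ = q⁻¹`.
We formalise the two-dimensional local fields `K((t))` (as `LaurentSeries K`) and
`K{{t}}` (as the submodule `mixedCarrier K` of `ℤ → K`), their higher topologies, and
the relevant functional-analytic notions (lattices, seminorms, boundedness,
c-compactness, compactoidness, completeness for nets, duality).
-/

open Filter Topology Set Pointwise
open scoped Classical

noncomputable section

namespace TwoDimLF

variable (K : Type) [NontriviallyNormedField K]

/-- `K` is a characteristic-zero nonarchimedean local field: the norm is nonarchimedean,
takes the values `q^ℤ` on `K˟` (with a uniformizer of norm `q⁻¹`), `K` is complete, locally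
compact, of characteristic zero, and the residue field has exactly `q` elements. -/
structure IsCharZeroLocalField (q : ℕ) : Prop where
  nonarch : ∀ x y : K, ‖x + y‖ ≤ max ‖x‖ ‖y‖
  one_lt_q : 1 < q
  norm_values : ∀ x : K, x ≠ 0 → ∃ n : ℤ, ‖x‖ = (q : ℝ) ^ (-n)
  exists_uniformizer : ∃ π : K, ‖π‖ = ((q : ℝ))⁻¹
  charZero : CharZero K
  locallyCompact : LocallyCompactSpace K
  complete : CompleteSpace K
  residue_card : ∃ s : Finset K, s.card = q ∧
    ∀ x : K, ‖x‖ ≤ 1 → ∃! y, y ∈ s ∧ ‖x - y‖ < 1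

/-- The fractional ideal `𝔭^n ⊆ K` for `n ∈ ℤ ∪ {-∞}`, with the convention `𝔭^(-∞) = K`. -/
def pB (q : ℕ) (n : WithBot ℤ) : Set K :=
  WithBot.recBotCoe Set.univ (fun m : ℤ => {x : K | ‖x‖ ≤ (q : ℝ) ^ (-m)}) n

/-- The fractional ideal `𝔭^n ⊆ K` for `n ∈ ℤ ∪ {∞}`, with the convention `𝔭^∞ = {0}`. -/
def pT (q : ℕ) (n : WithTop ℤ) : Set K :=
  WithTop.recTopCoe {0} (fun m : ℤ => {x : K | ‖x‖ ≤ (q : ℝ) ^ (-m)}) n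

/-- The fractional ideal `𝔭^n ⊆ K` for `n ∈ ℤ ∪ {±∞}`. -/
def pE (q : ℕ) (n : WithBot (WithTop ℤ)) : Set K :=
  WithBot.recBotCoe Set.univ (fun m : WithTop ℤ => pT K q m) n

/-- `q ^ n ∈ ℝ` for `n ∈ ℤ ∪ {-∞}`, with the convention `q^(-∞) = 0`. -/
def qpow (q : ℕ) (n : WithBot ℤ) : ℝ :=
  WithBot.recBotCoe 0 (fun m : ℤ => (q : ℝ) ^ m) n

/-- `1 - k` for `k ∈ ℤ ∪ {±∞}` (so `1 - (±∞) = ∓∞`). -/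
def oneSubE : WithBot (WithTop ℤ) → WithBot (WithTop ℤ) :=
  WithBot.recBotCoe ((⊤ : WithTop ℤ) : WithBot (WithTop ℤ))
    (WithTop.recTopCoe (⊥ : WithBot (WithTop ℤ))
      (fun z : ℤ => (((1 - z : ℤ) : WithTop ℤ) : WithBot (WithTop ℤ))))

section LCS

variable {V : Type} [AddCommGroup V] [Module K V]

/-- `S` is an `𝒪`-submodule of the `K`-vector space `V`, where `𝒪 = {c : K | ‖c‖ ≤ 1}`
is the ring of integers of `K`. -/
def IsOSubmodule (S : Set V) : Prop :=
  (0 : V) ∈ S ∧ (∀ x ∈ S, ∀ y ∈ S, x + y ∈ S) ∧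
    ∀ c : K, ‖c‖ ≤ 1 → ∀ x ∈ S, c • x ∈ S

/-- `S` is an `𝒪`-lattice in `V`: an `𝒪`-submodule such that every vector is carried
into `S` by some nonzero scalar. -/
def IsLatticeSet (S : Set V) : Prop :=
  IsOSubmodule K S ∧ ∀ v : V, ∃ a : K, a ≠ 0 ∧ a • v ∈ S

/-- A (nonarchimedean) seminorm on the `K`-vector space `V`. -/
def IsSeminorm (N : V → ℝ) : Prop :=
  (∀ (c : K) (v : V), N (c • v) = ‖c‖ * N v) ∧ ∀ v w : V, N (v + w) ≤ max (N v) (N w)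

/-- The gauge seminorm of a lattice `Λ ⊆ V`: `‖v‖_Λ = inf {‖a‖ : v ∈ aΛ}`. -/
def gaugeSeminorm (Λ : Set V) (v : V) : ℝ :=
  sInf {r : ℝ | ∃ a : K, v ∈ a • Λ ∧ r = ‖a‖}

/-- The group topology on `W` determined by a family `B` of neighbourhoods of zero:
neighbourhoods of `x` are generated by the translates `x + U`, `U ∈ B`. -/
def addTopologyOf {W : Type} [AddCommGroup W] (B : Set (Set W)) : TopologicalSpace W :=
  TopologicalSpace.mkOfNhds fun x => Filter.map (fun v => x + v) (⨅ U ∈ B, Filter.principal U)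

/-- `B` is (Von-Neumann) bounded for the locally convex topology `τ`: every open lattice
absorbs it. -/
def IsVNBounded (τ : TopologicalSpace V) (B : Set V) : Prop :=
  ∀ Λ : Set V, IsLatticeSet K Λ → IsOpen[τ] Λ → ∃ a : K, B ⊆ a • Λ

/-- The `𝒪`-submodule `A ⊆ V` is c-compact: for every decreasing filtered family of open
lattices `L i`, the canonical map `A → lim A/(L i ∩ A)` is surjective (phrased via
compatible families of representatives). -/
def IsCCompact (τ : TopologicalSpace V) (A : Set V) : Prop :=
  ∀ (ι : Type) (L : ι → Set V),
    (∀ i, IsLatticeSet K (L i) ∧ IsOpen[τ] (L i)) →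
    (∀ i j, ∃ k, L k ⊆ L i ∧ L k ⊆ L j) →
    ∀ x : ι → V, (∀ i, x i ∈ A) →
      (∀ i j, L j ⊆ L i → x j - x i ∈ L i) →
      ∃ a ∈ A, ∀ i, a - x i ∈ L i

/-- The `𝒪`-submodule `A ⊆ V` is compactoid: for every open lattice `Λ` there are finitely
many vectors `v₁, …, v_m ∈ V` with `A ⊆ Λ + 𝒪v₁ + ⋯ + 𝒪v_m`. -/
def IsCompactoid (τ : TopologicalSpace V) (A : Set V) : Prop :=
  ∀ Λ : Set V, IsLatticeSet K Λ → IsOpen[τ] Λ →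
    ∃ (m : ℕ) (v : Fin m → V),
      A ⊆ {u : V | ∃ l ∈ Λ, ∃ c : Fin m → K, (∀ j, ‖c j‖ ≤ 1) ∧ u = l + ∑ j, c j • v j}

/-- `A ⊆ V` is complete: every Cauchy net with values in `A` converges to a point of `A`
(for the topology `τ`). -/
def IsNetComplete (τ : TopologicalSpace V) (A : Set V) : Prop :=
  ∀ (ι : Type) [Preorder ι] [Nonempty ι],
    (∀ i j : ι, ∃ k, i ≤ k ∧ j ≤ k) →
    ∀ x : ι → V, (∀ i, x i ∈ A) →
      (∀ U ∈ @nhds V τ 0, ∃ i0, ∀ j ≥ i0, ∀ k ≥ i0, x j - x k ∈ U) →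
      ∃ a ∈ A, Filter.Tendsto x Filter.atTop (@nhds V τ a)

/-- `τ` makes `V` a locally convex topological `K`-vector space: it is a vector-space
topology whose filter of neighbourhoods of zero admits a basis of lattices. -/
def IsLCTVS (τ : TopologicalSpace V) : Prop :=
  @IsTopologicalAddGroup V τ _ ∧ @ContinuousSMul K V _ _ τ ∧
    ∀ S ∈ @nhds V τ 0, ∃ Λ : Set V, IsLatticeSet K Λ ∧ Λ ∈ @nhds V τ 0 ∧ Λ ⊆ S

/-- The topological dual of `(V, τ)`: continuous `K`-linear forms, as a set of functions. -/
def dualSet (τ : TopologicalSpace V) : Set (V → K) :=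
  {l | IsLinearMap K l ∧ @Continuous V K τ _ l}

/-- Basic neighbourhoods of zero for the `c`-topology on `V → K`: uniform convergence on
compactoid `𝒪`-submodules. -/
def cTopBasic (τ : TopologicalSpace V) : Set (Set (V → K)) :=
  {S | ∃ (B : Set V) (ε : ℝ), IsOSubmodule K B ∧ IsCompactoid K τ B ∧ 0 < ε ∧
    S = {l : V → K | ∀ x ∈ B, ‖l x‖ ≤ ε}}

/-- The `c`-topology (uniform convergence on compactoid `𝒪`-submodules) on `V → K`. -/
def cTop (τ : TopologicalSpace V) : TopologicalSpace (V → K) :=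
  addTopologyOf (cTopBasic K τ)

/-- The pseudo-polar `A^p = {l ∈ V' : |l(v)| < 1 for all v ∈ A}`. -/
def pseudoPolar (τ : TopologicalSpace V) (A : Set V) : Set (V → K) :=
  {l | l ∈ dualSet K τ ∧ ∀ v ∈ A, ‖l v‖ < 1}

/-- The pseudo-bipolar `A^{pp} = {v ∈ V : |l(v)| < 1 for all l ∈ A^p}`. -/
def pseudoBipolar (τ : TopologicalSpace V) (A : Set V) : Set V :=
  {v | ∀ l ∈ pseudoPolar K τ A, ‖l v‖ < 1}

end LCS

/-! ### The equal characteristic field `K((t))` -/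

/-- Basic neighbourhoods of zero for the higher topology on `K((t))`:
`Σ U_i t^i` where each `U_i` is an open neighbourhood of `0` in `K` and `U_i = K` for all
sufficiently large `i`. -/
def laurentBasic : Set (Set (LaurentSeries K)) :=
  {S | ∃ U : ℤ → Set K, (∀ i, IsOpen (U i) ∧ (0 : K) ∈ U i) ∧
    (∃ N : ℤ, ∀ i, N ≤ i → U i = Set.univ) ∧
    S = {f : LaurentSeries K | ∀ i, f.coeff i ∈ U i}}

/-- The higher topology on `K((t))`. -/
def laurentTop : TopologicalSpace (LaurentSeries K) := addTopologyOf (laurentBasic K)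

/-- `Λ = Σ_{i∈ℤ} 𝔭^{n_i} t^i ⊆ K((t))` for a sequence `(n_i) ⊆ ℤ ∪ {-∞}`. -/
def laurentLambda (q : ℕ) (n : ℤ → WithBot ℤ) : Set (LaurentSeries K) :=
  {f | ∀ i, f.coeff i ∈ pB K q (n i)}

/-- `B = Σ_{i∈ℤ} 𝔭^{k_i} t^i ⊆ K((t))` for a sequence `(k_i) ⊆ ℤ ∪ {∞}`. -/
def laurentPT (q : ℕ) (k : ℤ → WithTop ℤ) : Set (LaurentSeries K) :=
  {f | ∀ i, f.coeff i ∈ pT K q (k i)}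

/-- `A = Σ_{i∈ℤ} 𝔭^{k_i} t^i ⊆ K((t))` for a sequence `(k_i) ⊆ ℤ ∪ {±∞}`. -/
def laurentPE (q : ℕ) (k : ℤ → WithBot (WithTop ℤ)) : Set (LaurentSeries K) :=
  {f | ∀ i, f.coeff i ∈ pE K q (k i)}

/-- The admissible seminorm `‖Σ x_i t^i‖ = max_i ‖x_i‖ q^{n_i}` on `K((t))`. -/
def laurentSeminorm (q : ℕ) (n : ℤ → WithBot ℤ) (f : LaurentSeries K) : ℝ :=
  sSup {r : ℝ | ∃ i : ℤ, r = ‖f.coeff i‖ * qpow q (n i)}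

/-- The ring of integers `K[[t]] ⊆ K((t))`. -/
def laurentIntegers : Set (LaurentSeries K) := {f | ∀ i, i < 0 → f.coeff i = 0}

/-- The rank-two ring of integers `𝒪 + tK[[t]] ⊆ K((t))`. -/
def laurentRankTwo : Set (LaurentSeries K) :=
  {f | (∀ i, i < 0 → f.coeff i = 0) ∧ ‖f.coeff 0‖ ≤ 1}

/-- The pairing `γ(x)(y) = π₀(xy) = Σ_i x_i y_{-i}` on `K((t))`. -/
def laurentPairing (x y : LaurentSeries K) : K := ∑' i : ℤ, x.coeff i * y.coeff (-i)

/-! ### The mixed characteristic field `K{{t}}` -/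

/-- The underlying `K`-vector space of `K{{t}}`: functions `x : ℤ → K` (coefficients of
`Σ x_i t^i`) with `inf_i v_K(x_i) > -∞` (i.e. bounded norms) and `x_i → 0` as `i → -∞`. -/
def mixedCarrier : Submodule K (ℤ → K) where
  carrier := {x | (∃ C : ℝ, ∀ i, ‖x i‖ ≤ C) ∧ Filter.Tendsto x Filter.atBot (nhds (0 : K))}
  zero_mem' := ⟨⟨0, fun i => by simp⟩, tendsto_const_nhds⟩
  add_mem' := by
    rintro x y ⟨⟨C, hC⟩, hx⟩ ⟨⟨D, hD⟩, hy⟩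
    refine ⟨⟨C + D, fun i => (norm_add_le _ _).trans (add_le_add (hC i) (hD i))⟩, ?_⟩
    have h2 := hx.add hy
    rw [add_zero] at h2
    exact h2
  smul_mem' := by
    rintro c x ⟨⟨C, hC⟩, hx⟩
    refine ⟨⟨‖c‖ * C, fun i => ?_⟩, ?_⟩
    · have h : ‖(c • x) i‖ = ‖c‖ * ‖x i‖ := by simp [norm_smul]
      rw [h]
      exact mul_le_mul_of_nonneg_left (hC i) (norm_nonneg c)
    · have h2 := hx.const_smul c
      rw [smul_zero] at h2
      exact h2

/-- The field `K{{t}}`, as a `K`-vector space. -/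
abbrev Mt := ↥(mixedCarrier K)

/-- Basic neighbourhoods of zero for the higher topology on `K{{t}}`:
`Σ V_i t^i` where each `V_i` is an open neighbourhood of `0` in `K`, some `𝔭^c` is
contained in every `V_i`, and for every `l` eventually `𝔭^l ⊆ V_i`. -/
def mixedBasic (q : ℕ) : Set (Set (Mt K)) :=
  {S | ∃ Vs : ℤ → Set K, (∀ i, IsOpen (Vs i) ∧ (0 : K) ∈ Vs i) ∧
    (∃ c : ℤ, ∀ i, {x : K | ‖x‖ ≤ (q : ℝ) ^ (-c)} ⊆ Vs i) ∧
    (∀ l : ℤ, ∃ i0 : ℤ, ∀ i, i0 ≤ i → {x : K | ‖x‖ ≤ (q : ℝ) ^ (-l)} ⊆ Vs i) ∧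
    S = {f : Mt K | ∀ i, f.1 i ∈ Vs i}}

/-- The higher topology on `K{{t}}`. -/
def mixedTop (q : ℕ) : TopologicalSpace (Mt K) := addTopologyOf (mixedBasic K q)

/-- `Λ = Σ_{i∈ℤ} 𝔭^{n_i} t^i ⊆ K{{t}}` for a sequence `(n_i) ⊆ ℤ ∪ {-∞}`. -/
def mixedLambda (q : ℕ) (n : ℤ → WithBot ℤ) : Set (Mt K) :=
  {f | ∀ i, f.1 i ∈ pB K q (n i)}

/-- `B = Σ_{i∈ℤ} 𝔭^{k_i} t^i ⊆ K{{t}}` for a sequence `(k_i) ⊆ ℤ ∪ {∞}`. -/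
def mixedPT (q : ℕ) (k : ℤ → WithTop ℤ) : Set (Mt K) :=
  {f | ∀ i, f.1 i ∈ pT K q (k i)}

/-- `A = Σ_{i∈ℤ} 𝔭^{k_i} t^i ⊆ K{{t}}` for a sequence `(k_i) ⊆ ℤ ∪ {±∞}`. -/
def mixedPE (q : ℕ) (k : ℤ → WithBot (WithTop ℤ)) : Set (Mt K) :=
  {f | ∀ i, f.1 i ∈ pE K q (k i)}

/-- The admissible seminorm `‖Σ x_i t^i‖ = sup_i ‖x_i‖ q^{n_i}` on `K{{t}}`. -/
def mixedSeminorm (q : ℕ) (n : ℤ → WithBot ℤ) (f : Mt K) : ℝ :=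
  sSup {r : ℝ | ∃ i : ℤ, r = ‖f.1 i‖ * qpow q (n i)}

/-- The ring of integers `𝒪{{t}} ⊆ K{{t}}`. -/
def mixedIntegers : Set (Mt K) := {f | ∀ i, ‖f.1 i‖ ≤ 1}

/-- The rank-two ring of integers `Σ_{i<0} 𝔭 t^i + Σ_{i≥0} 𝒪 t^i ⊆ K{{t}}`. -/
def mixedRankTwo (q : ℕ) : Set (Mt K) :=
  {f | (∀ i : ℤ, i < 0 → ‖f.1 i‖ ≤ ((q : ℝ))⁻¹) ∧ ∀ i : ℤ, 0 ≤ i → ‖f.1 i‖ ≤ 1}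

/-- The monomial `t^i ∈ K{{t}}`. -/
def mixedT (i : ℤ) : Mt K :=
  ⟨fun j => if j = i then 1 else 0,
    ⟨⟨1, fun j => by by_cases h : j = i <;> simp [h]⟩, by
      refine (tendsto_const_nhds : Filter.Tendsto (fun _ : ℤ => (0 : K))
        Filter.atBot (nhds 0)).congr' ?_
      filter_upwards [Filter.eventually_le_atBot (i - 1)] with j hj
      have h : j ≠ i := by omega
      simp [h]⟩⟩

/-- Coefficients of the product of two elements of `K{{t}}` (Cauchy product). -/
def mixedMulCoeff (x y : Mt K) : ℤ → K := fun k => ∑' i : ℤ, x.1 i * y.1 (k - i)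

/-- Multiplication on `K{{t}}`. -/
def mixedMul (x y : Mt K) : Mt K :=
  if h : mixedMulCoeff K x y ∈ mixedCarrier K then ⟨_, h⟩ else 0

/-- The pairing `γ(x)(y) = π₀(xy) = Σ_i x_i y_{-i}` on `K{{t}}`. -/
def mixedPairing (x y : Mt K) : K := ∑' i : ℤ, x.1 i * y.1 (-i)

/-!
Both topologies are group topologies, so it suffices to compare neighbourhoods of `0`. Since `K`
is ultrametric, the sets `{f | ‖f_i‖ < ε_i for all i < N}` are `𝒪`-lattices and form a basis of
neighbourhoods of `0` for the higher topology; they make `K((t))` a locally convex space in which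
every inclusion `t^j K[[t]] ↪ K((t))` is continuous. Conversely, let `Λ` be a lattice that is a
neighbourhood of `0` for a locally convex topology making all these inclusions continuous. The
inclusion of `t^j K[[t]]` puts `t^j K[[t]] ∩ B ⊆ Λ` for some such set `B`; for `j = i` this
controls the single monomial `c t^i`, for `j = 0` the power series part. A Laurent series is
the sum of finitely many monomials of negative degree and a power series, so `Λ` contains the
intersection of all these sets, which is again of the above form.
-/

section LaurentBall

variable {𝕜 : Type*} [NormedField 𝕜]

def laurentBall (N : ℤ) (ε : ℤ → ℝ) : Set (LaurentSeries 𝕜) :=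
  {f | ∀ i < N, ‖f.coeff i‖ < ε i}

def laurentBalls : Set (Set (LaurentSeries 𝕜)) :=
  {S | ∃ (N : ℤ) (ε : ℤ → ℝ), (∀ i, 0 < ε i) ∧ laurentBall N ε = S}

variable {N : ℤ} {ε : ℤ → ℝ}

lemma zero_mem_laurentBall (hε : ∀ i, 0 < ε i) : (0 : LaurentSeries 𝕜) ∈ laurentBall N ε :=
  fun i _ => by simpa using hε i

lemma add_mem_laurentBall [IsUltrametricDist 𝕜] {f g : LaurentSeries 𝕜}
    (hf : f ∈ laurentBall N ε) (hg : g ∈ laurentBall N ε) : f + g ∈ laurentBall N ε := fun i hi =>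
  (IsUltrametricDist.norm_add_le_max _ _).trans_lt (max_lt (hf i hi) (hg i hi))

lemma smul_mem_laurentBall {c : 𝕜} {f : LaurentSeries 𝕜} (hc : ‖c‖ ≤ 1)
    (hf : f ∈ laurentBall N ε) : c • f ∈ laurentBall N ε := fun i hi => by
  rw [HahnSeries.coeff_smul, norm_smul]
  exact (mul_le_of_le_one_left (norm_nonneg _) hc).trans_lt (hf i hi)

lemma neg_mem_laurentBall {f : LaurentSeries 𝕜} (hf : f ∈ laurentBall N ε) :
    -f ∈ laurentBall N ε := fun i hi => by
  simpa using hf i hi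

lemma sub_single_mem_laurentBall (hε : ∀ i, 0 < ε i) {f : LaurentSeries 𝕜}
    (hf : f ∈ laurentBall N ε) (k : ℤ) :
    f - HahnSeries.single k (f.coeff k) ∈ laurentBall N ε := fun i hi => by
  rcases eq_or_ne i k with rfl | hik
  · simpa using hε i
  · simpa [HahnSeries.coeff_single_of_ne hik] using hf i hi

lemma eventually_smul_mem_laurentBall (hε : ∀ i, 0 < ε i) (f : LaurentSeries 𝕜) :
    ∀ᶠ c in 𝓝 (0 : 𝕜), c • f ∈ laurentBall N ε := by
  have hcoeff : ∀ i, ∀ᶠ c in 𝓝 (0 : 𝕜), ‖c * f.coeff i‖ < ε i := fun i => by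
    have : Tendsto (fun c : 𝕜 => ‖c * f.coeff i‖) (𝓝 0) (𝓝 0) := by
      simpa using ((continuous_mul_const (f.coeff i)).tendsto 0).norm
    exact this.eventually (gt_mem_nhds (hε i))
  -- only the finitely many coefficients between the order of `f` and `N` matter
  filter_upwards [(Finset.Ico f.order N).eventually_all.2 fun i _ => hcoeff i] with c hc i hi
  rw [HahnSeries.coeff_smul, smul_eq_mul]
  rcases lt_or_ge i f.order with hlt | hge
  · simpa [HahnSeries.coeff_eq_zero_of_lt_order hlt] using hε i
  · exact hc i (Finset.mem_Ico.2 ⟨hge, hi⟩)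

lemma smul_mem_laurentBall_of_mem_div {c : 𝕜} {f : LaurentSeries 𝕜}
    (hf : f ∈ laurentBall N fun i => ε i / (‖c‖ + 1)) : c • f ∈ laurentBall N ε := fun i hi => by
  have hf' := hf i hi
  rw [lt_div_iff₀ (by positivity)] at hf'
  rw [HahnSeries.coeff_smul, norm_smul]
  nlinarith [norm_nonneg c, norm_nonneg (f.coeff i)]

def laurentModuleFilterBasis [IsUltrametricDist 𝕜] : ModuleFilterBasis 𝕜 (LaurentSeries 𝕜) where
  toAddGroupFilterBasis := addGroupFilterBasisOfComm laurentBalls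
    ⟨_, 0, fun _ => 1, fun _ => one_pos, rfl⟩
    (by
      rintro _ _ ⟨N, ε, hε, rfl⟩ ⟨N', ε', hε', rfl⟩
      exact ⟨_, ⟨max N N', fun i => min (ε i) (ε' i), fun i => lt_min (hε i) (hε' i), rfl⟩,
        fun f hf => ⟨fun i hi => (hf i (lt_max_of_lt_left hi)).trans_le (min_le_left _ _),
          fun i hi => (hf i (lt_max_of_lt_right hi)).trans_le (min_le_right _ _)⟩⟩)
    (by rintro _ ⟨N, ε, hε, rfl⟩; exact zero_mem_laurentBall hε)
    (by
      rintro _ ⟨N, ε, hε, rfl⟩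
      exact ⟨_, ⟨N, ε, hε, rfl⟩, Set.add_subset_iff.2 fun f hf g hg => add_mem_laurentBall hf hg⟩)
    (by
      rintro _ ⟨N, ε, hε, rfl⟩
      exact ⟨_, ⟨N, ε, hε, rfl⟩, fun f hf => neg_mem_laurentBall hf⟩)
  smul' := by
    rintro _ ⟨N, ε, hε, rfl⟩
    refine ⟨Metric.closedBall 0 1, Metric.closedBall_mem_nhds 0 one_pos, _, ⟨N, ε, hε, rfl⟩, ?_⟩
    rintro _ ⟨c, hc, f, hf, rfl⟩
    exact smul_mem_laurentBall (by simpa using hc) hf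
  smul_left' := by
    rintro c _ ⟨N, ε, hε, rfl⟩
    exact ⟨_, ⟨N, _, fun i => div_pos (hε i) (by positivity), rfl⟩,
      fun f hf => smul_mem_laurentBall_of_mem_div hf⟩
  smul_right' := by
    rintro f _ ⟨N, ε, hε, rfl⟩
    exact eventually_smul_mem_laurentBall hε f

end LaurentBall

/-- The product topology of the coefficients on `t^j R[[t]] ⊆ R((t))`. -/
def coeffTopology {R : Type*} [Zero R] [TopologicalSpace R] (j : ℤ) :
    TopologicalSpace {g : LaurentSeries R // ∀ i < j, g.coeff i = 0} :=
  TopologicalSpace.induced (fun g i => (g : LaurentSeries R).coeff i) inferInstance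

section Inclusions

variable {𝕜 : Type*} [NormedField 𝕜] {τ : TopologicalSpace (LaurentSeries 𝕜)}
  {Λ : Set (LaurentSeries 𝕜)}

lemma exists_laurentBall_inter_subset (hΛ : Λ ∈ @nhds _ τ 0) {j : ℤ}
    (hj : @Continuous _ _ (coeffTopology j) τ Subtype.val) :
    ∃ (N : ℤ) (ε : ℤ → ℝ), (∀ i, 0 < ε i) ∧
      ∀ g ∈ laurentBall N ε, (∀ i < j, g.coeff i = 0) → g ∈ Λ := by
  let z : {g : LaurentSeries 𝕜 // ∀ i < j, g.coeff i = 0} :=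
    ⟨0, fun _ _ => HahnSeries.coeff_zero⟩
  have h0 := @ContinuousAt.preimage_mem_nhds _ _ (coeffTopology j) τ _ z _
    (@Continuous.continuousAt _ _ (coeffTopology j) τ _ z hj) hΛ
  rw [coeffTopology, nhds_induced] at h0
  obtain ⟨T, hT, hTΛ⟩ := mem_comap.1 h0
  rw [nhds_pi] at hT
  obtain ⟨⟨I, δ⟩, ⟨hI, hδ⟩, hIT⟩ := (hasBasis_pi fun _ => Metric.nhds_basis_ball).mem_iff.1 hT
  obtain ⟨b, hb⟩ := hI.bddAbove
  refine ⟨b + 1, fun i => if i ∈ I then δ i else 1, fun i => ?_, fun g hg hgj => ?_⟩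
  · beta_reduce
    split_ifs with hi
    exacts [hδ i hi, one_pos]
  refine hTΛ (a := ⟨g, hgj⟩) (hIT fun i hi => ?_)
  have hgi := hg i (Int.lt_add_one_iff.2 (hb hi))
  simp only [hi, if_true] at hgi
  simpa [z] using hgi

lemma exists_laurentBall_subset (hΛ : Λ ∈ @nhds _ τ 0) (hadd : ∀ x ∈ Λ, ∀ y ∈ Λ, x + y ∈ Λ)
    (hincl : ∀ j, @Continuous _ _ (coeffTopology j) τ Subtype.val) :
    ∃ (N : ℤ) (ε : ℤ → ℝ), (∀ i, 0 < ε i) ∧ laurentBall N ε ⊆ Λ := by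
  obtain ⟨N₀, δ₀, hδ₀, hΛ₀⟩ := exists_laurentBall_inter_subset hΛ (hincl 0)
  choose N δ hδ hΛδ using fun i => exists_laurentBall_inter_subset hΛ (hincl i)
  have hsingle (i : ℤ) (c : 𝕜) (hc : ‖c‖ < δ i i) : HahnSeries.single i c ∈ Λ := by
    refine hΛδ i _ (fun k _ => ?_) fun k hk => HahnSeries.coeff_single_of_ne hk.ne
    rcases eq_or_ne k i with rfl | hki
    · simpa using hc
    · simpa [HahnSeries.coeff_single_of_ne hki] using hδ i k
  let ε i := if i < 0 then δ i i else δ₀ i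
  have hε (i : ℤ) : 0 < ε i := by
    unfold ε
    split_ifs
    exacts [hδ i i, hδ₀ i]
  have hpeel (j : ℤ) (hj : j ≤ 0) :
      ∀ f ∈ laurentBall (max N₀ 0) ε, (∀ i < j, f.coeff i = 0) → f ∈ Λ := by
    induction j, hj using Int.leInductionDown with
    | base =>
      intro f hf hf0
      refine hΛ₀ f (fun i hi => ?_) hf0
      rcases lt_or_ge i 0 with hi0 | hi0
      · simpa [hf0 i hi0] using hδ₀ i
      · simpa [ε, not_lt.2 hi0] using hf i (lt_max_of_lt_left hi)
    | pred j hj ih =>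
      intro f hf hfj
      have hlow : ‖f.coeff (j - 1)‖ < δ (j - 1) (j - 1) := by
        simpa [ε, show j - 1 < 0 by omega] using hf (j - 1) (by omega)
      have hrest : ∀ i < j, (f - HahnSeries.single (j - 1) (f.coeff (j - 1))).coeff i = 0 := by
        intro i hi
        rcases eq_or_ne i (j - 1) with rfl | hij
        · simp
        · simp [HahnSeries.coeff_single_of_ne hij, hfj i (by omega)]
      simpa using hadd _ (hsingle _ _ hlow) _ (ih _ (sub_single_mem_laurentBall hε hf _) hrest)
  refine ⟨max N₀ 0, ε, hε, fun f hf => hpeel (min f.order 0) (min_le_right _ _) f hf ?_⟩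
  exact fun i hi => HahnSeries.coeff_eq_zero_of_lt_order (hi.trans_le (min_le_left _ _))

end Inclusions

lemma addTopologyOf_eq_topology {W : Type} [AddCommGroup W] {S : Set (Set W)}
    {B : AddGroupFilterBasis W} (h : ⨅ U ∈ S, 𝓟 U = B.filter) : addTopologyOf S = B.topology := by
  simp only [addTopologyOf, h]
  rfl

lemma exists_ne_zero_smul_mem_of_mem_nhds_zero {𝕜 V : Type*} [NontriviallyNormedField 𝕜]
    [AddCommGroup V] [Module 𝕜 V] [TopologicalSpace V] [ContinuousSMul 𝕜 V] {S : Set V}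
    (hS : S ∈ 𝓝 (0 : V)) (v : V) : ∃ a : 𝕜, a ≠ 0 ∧ a • v ∈ S := by
  have hv : ∀ᶠ a in 𝓝 (0 : 𝕜), a • v ∈ S :=
    (continuous_id.smul continuous_const).tendsto' 0 0 (zero_smul _ _) hS
  obtain ⟨a, ha, ha0⟩ :=
    ((hv.filter_mono nhdsWithin_le_nhds).and (self_mem_nhdsWithin (s := {0}ᶜ))).exists
  exact ⟨a, ha0, ha⟩

section LaurentTop

variable {K} [IsUltrametricDist K]

lemma iInf_laurentBasic_principal :
    ⨅ U ∈ laurentBasic K, 𝓟 U = (laurentModuleFilterBasis (𝕜 := K)).filter := by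
  refine le_antisymm ((FilterBasis.hasBasis _).ge_iff.2 ?_) (le_iInf₂ fun U hU => ?_)
  · rintro _ ⟨N, ε, hε, rfl⟩
    refine mem_iInf_of_mem _ (mem_iInf_of_mem ?_ (mem_principal_self _))
    refine ⟨fun i => if i < N then Metric.ball 0 (ε i) else univ, fun i => ?_,
      ⟨N, fun i hi => ?_⟩, ?_⟩
    · beta_reduce
      split_ifs
      exacts [⟨Metric.isOpen_ball, Metric.mem_ball_self (hε i)⟩, ⟨isOpen_univ, mem_univ _⟩]
    · simp [not_lt.2 hi]
    · ext f
      refine forall_congr' fun i => ?_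
      beta_reduce
      split_ifs with hi <;> simp [hi]
  · obtain ⟨U, hU, ⟨N, hN⟩, rfl⟩ := hU
    choose ε hε hεU using fun i => Metric.isOpen_iff.1 (hU i).1 0 (hU i).2
    refine le_principal_iff.2 <|
      mem_of_superset (FilterBasis.mem_filter_of_mem _ ⟨N, ε, hε, rfl⟩) fun f hf i => ?_
    rcases lt_or_ge i N with hi | hi
    · exact hεU i (mem_ball_zero_iff.2 (hf i hi))
    · simp [hN i hi]

lemma laurentTop_eq : laurentTop K = (laurentModuleFilterBasis (𝕜 := K)).topology :=
  addTopologyOf_eq_topology iInf_laurentBasic_principal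

lemma isLCTVS_laurentTop : IsLCTVS K (laurentTop K) := by
  rw [laurentTop_eq]
  let := (laurentModuleFilterBasis (𝕜 := K)).topology
  refine ⟨inferInstance, inferInstance, fun S hS => ?_⟩
  obtain ⟨_, ⟨N, ε, hε, rfl⟩, hNS⟩ :=
    (laurentModuleFilterBasis (𝕜 := K)).toAddGroupFilterBasis.nhds_zero_hasBasis.mem_iff.1 hS
  have hball : laurentBall N ε ∈ 𝓝 (0 : LaurentSeries K) :=
    AddGroupFilterBasis.mem_nhds_zero _ ⟨N, ε, hε, rfl⟩
  exact ⟨_, ⟨⟨zero_mem_laurentBall hε, fun f hf g hg => add_mem_laurentBall hf hg,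
    fun c hc f hf => smul_mem_laurentBall hc hf⟩, exists_ne_zero_smul_mem_of_mem_nhds_zero hball⟩,
    hball, hNS⟩

lemma continuous_val_laurentTop (j : ℤ) :
    @Continuous _ _ (coeffTopology j) (laurentTop K) Subtype.val := by
  let := coeffTopology (R := K) j
  let B := (laurentModuleFilterBasis (𝕜 := K)).toAddGroupFilterBasis
  rw [laurentTop_eq]
  refine (@continuous_iff_continuousAt _ _ _ B.topology _).2 fun g => ?_
  refine (B.nhds_hasBasis _).tendsto_right_iff.2 ?_
  rintro _ ⟨N, ε, hε, rfl⟩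
  have hcoeff (i : ℤ) : ∀ᶠ h in 𝓝 g, ‖h.1.coeff i - g.1.coeff i‖ < ε i := by
    have : Continuous fun h : {g : LaurentSeries K // ∀ i < j, g.coeff i = 0} => h.1.coeff i :=
      (continuous_apply i).comp continuous_induced_dom
    simpa [dist_eq_norm] using Metric.tendsto_nhds.1 (this.tendsto g) (ε i) (hε i)
  filter_upwards [(Finset.Ico j N).eventually_all.2 fun i _ => hcoeff i] with h hh
  refine ⟨h.1 - g.1, fun i hi => ?_, add_sub_cancel _ _⟩
  rw [HahnSeries.coeff_sub]
  rcases lt_or_ge i j with hij | hij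
  · simpa [h.2 i hij, g.2 i hij] using hε i
  · exact hh i (Finset.mem_Ico.2 ⟨hij, hi⟩)

lemma laurentTop_le {τ : TopologicalSpace (LaurentSeries K)} (hτ : IsLCTVS K τ)
    (hincl : ∀ j, @Continuous _ _ (coeffTopology j) τ Subtype.val) : laurentTop K ≤ τ := by
  obtain ⟨hgroup, -, hlattice⟩ := hτ
  let B := (laurentModuleFilterBasis (𝕜 := K)).toAddGroupFilterBasis
  have hzero : B.filter ≤ @nhds _ τ 0 := fun S hS => by
    obtain ⟨Λ, ⟨⟨-, hadd, -⟩, -⟩, hΛ, hΛS⟩ := hlattice S hS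
    obtain ⟨N, ε, hε, hNΛ⟩ := exists_laurentBall_subset hΛ hadd hincl
    exact mem_of_superset (B.mem_filter_of_mem ⟨N, ε, hε, rfl⟩) (hNΛ.trans hΛS)
  rw [laurentTop_eq, le_iff_nhds]
  intro x
  rw [B.nhds_eq, ← @map_add_left_nhds_zero _ τ _ hgroup x]
  exact map_mono hzero

end LaurentTop

/-- Under the identification `K((t)) = ⋃_{j∈ℤ} t^j K[[t]]`, where each
subspace `t^j K[[t]]` carries the product topology of `K^ℕ` (induced by its coefficients),
the higher topology on `K((t))` coincides with the strict inductive limit topology: the finest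
locally convex vector topology making every inclusion `t^j K[[t]] ↪ K((t))` continuous. -/
theorem statement2 (q : ℕ) (hK : IsCharZeroLocalField K q) :
    (∀ f : LaurentSeries K, ∃ j : ℤ, ∀ i : ℤ, i < j → f.coeff i = 0) ∧
    IsLCTVS K (laurentTop K) ∧
    (∀ j : ℤ,
      @Continuous {g : LaurentSeries K // ∀ i : ℤ, i < j → g.coeff i = 0} (LaurentSeries K)
        (TopologicalSpace.induced
          (fun g => fun i : ℤ => (g : LaurentSeries K).coeff i)
          (inferInstance : TopologicalSpace (ℤ → K)))
        (laurentTop K) Subtype.val) ∧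
    (∀ τ : TopologicalSpace (LaurentSeries K), IsLCTVS K τ →
      (∀ j : ℤ,
        @Continuous {g : LaurentSeries K // ∀ i : ℤ, i < j → g.coeff i = 0} (LaurentSeries K)
          (TopologicalSpace.induced
            (fun g => fun i : ℤ => (g : LaurentSeries K).coeff i)
            (inferInstance : TopologicalSpace (ℤ → K)))
          τ Subtype.val) →
      ∀ S : Set (LaurentSeries K), IsOpen[τ] S → IsOpen[laurentTop K] S) := by
  have : IsUltrametricDist K :=
    IsUltrametricDist.isUltrametricDist_of_forall_norm_add_le_max_norm hK.nonarch
  exact ⟨fun f => ⟨f.order, fun _ => HahnSeries.coeff_eq_zero_of_lt_order⟩, isLCTVS_laurentTop,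
    continuous_val_laurentTop,
    fun τ hτ hincl S => TopologicalSpace.le_def.1 (laurentTop_le hτ hincl) S⟩

end TwoDimLF
end
end

section
/- For any sequence (n_i)_{i∈ℤ} ⊂ ℤ ∪ {-∞} that is bounded above and satisfies n_i → -∞ as i → ∞, the map ‖Σ_{i∈ℤ} x_i t^i‖ = sup_{i∈ℤ} |x_i| q^{n_i} is a well-defined seminorm on the K-vector space K{{t}} (the supremum exists), and the higher topology on K{{t}} is exactly the locally convex topology generated by the family of all such seminorms. -/
/-!
Common setting: `K` is a characteristic-zero local field (a finite extension of `ℚ_p`)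
with ring of integers `𝒪 = {c : K | ‖c‖ ≤ 1}`, maximal ideal `𝔭 = {c : K | ‖c‖ < 1}`,
residue field of cardinality `q` and the absolute value normalised by `‖π‖ = q⁻¹`.
We formalise the two-dimensional local fields `K((t))` (as `LaurentSeries K`) and
`K{{t}}` (as the submodule `mixedCarrier K` of `ℤ → K`), their higher topologies, and
the relevant functional-analytic notions (lattices, seminorms, boundedness,
c-compactness, compactoidness, completeness for nets, duality).
-/

open Filter Topology Set Pointwise
open scoped Classical

noncomputable section

namespace TwoDimLF

variable (K : Type) [NontriviallyNormedField K]

/-!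
A basic neighbourhood `Σ V_i t^i` contains a lattice `Σ 𝔭^{m_i} t^i` with `m_i` bounded above
and `m_i → -∞` (take `m_i` minimal with `𝔭^{m_i} ⊆ V_i` subject to `c - i ≤ m_i ≤ c`), and this
lattice is the unit ball of the seminorm with exponents `m_i`. Conversely, an `ε`-ball of such a
seminorm is itself of the form `Σ V_i t^i`, with `V_i` a closed, hence open, ball of `K`. Since
the unit balls are closed under addition, the basic sets form a neighbourhood basis of zero.
-/

section AddTopology

variable {W : Type} [AddCommGroup W] {B : Set (Set W)}

theorem hasBasis_nhds_addTopologyOf (hne : B.Nonempty) (hinter : ∀ U ∈ B, ∀ V ∈ B, U ∩ V ∈ B)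
    (hzero : ∀ U ∈ B, (0 : W) ∈ U) (hadd : ∀ U ∈ B, ∃ V ∈ B, V + V ⊆ U) (a : W) :
    (@nhds W (addTopologyOf B) a).HasBasis (· ∈ B) fun U => (a + ·) '' U := by
  have hbasis : (⨅ U ∈ B, 𝓟 U).HasBasis (· ∈ B) id :=
    hasBasis_biInf_principal (fun U hU V hV =>
      ⟨U ∩ V, hinter U hU V hV, inter_subset_left, inter_subset_right⟩) hne
  suffices hnhds : @nhds W (addTopologyOf B) a = map (a + ·) (⨅ U ∈ B, 𝓟 U) by
    rw [hnhds]; exact hbasis.map _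
  refine TopologicalSpace.nhds_mkOfNhds_of_hasBasis (fun x => hbasis.map (x + ·)) ?_ ?_ a
  · exact fun x U hU => ⟨0, hzero U hU, add_zero x⟩
  · intro x U hU
    obtain ⟨V, hV, hVU⟩ := hadd U hU
    refine (hbasis.map (x + ·)).eventually_iff.2 ⟨V, hV, ?_⟩
    rintro _ ⟨v, hv, rfl⟩
    refine (hbasis.map _).mem_iff.2 ⟨V, hV, ?_⟩
    rintro _ ⟨w, hw, rfl⟩
    exact ⟨v + w, hVU (add_mem_add hv hw), (add_assoc x v w).symm⟩

theorem mem_nhds_zero_addTopologyOf (hne : B.Nonempty)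
    (hinter : ∀ U ∈ B, ∀ V ∈ B, U ∩ V ∈ B) (hzero : ∀ U ∈ B, (0 : W) ∈ U)
    (hadd : ∀ U ∈ B, ∃ V ∈ B, V + V ⊆ U) {S : Set W} :
    S ∈ @nhds W (addTopologyOf B) 0 ↔ ∃ U ∈ B, U ⊆ S := by
  simp [(hasBasis_nhds_addTopologyOf hne hinter hzero hadd 0).mem_iff]

end AddTopology

theorem isOpen_setOf_norm_mul_le {E : Type*} [SeminormedAddCommGroup E] [IsUltrametricDist E]
    {a ε : ℝ} (ha : 0 ≤ a) (hε : 0 < ε) : IsOpen {x : E | ‖x‖ * a ≤ ε} := by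
  rcases ha.eq_or_lt with rfl | ha
  · simp [hε.le]
  · have hball : {x : E | ‖x‖ * a ≤ ε} = Metric.closedBall 0 (ε / a) := by
      ext x; simp [le_div_iff₀ ha]
    rw [hball]
    exact IsUltrametricDist.isOpen_closedBall _ (by positivity)

theorem exists_bdd_tendsto_atBot_of_forall_eventually {P : ℤ → ℤ → Prop} {c : ℤ} (hc : ∀ i, P i c)
    (htail : ∀ l, ∀ᶠ i in atTop, P i l) :
    ∃ m : ℤ → ℤ, (∀ i, m i ≤ c ∧ P i (m i)) ∧ Tendsto m atTop atBot := by
  let k : ℤ → ℕ := fun i => Nat.findGreatest (fun k => P i (c - k)) i.toNat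
  refine ⟨fun i => c - k i, fun i => ⟨sub_le_self c (k i).cast_nonneg, ?_⟩,
    tendsto_atTop_atBot.2 fun l => ?_⟩
  · exact Nat.findGreatest_spec (P := fun k => P i (c - k)) (Nat.zero_le _) (by simpa using hc i)
  · obtain ⟨i0, hi0⟩ := eventually_atTop.1 (htail l)
    refine ⟨max i0 (c - l), fun i hi => ?_⟩
    rcases le_or_gt c l with hcl | hlc
    · omega
    · have hP : P i (c - ((c - l).toNat : ℕ)) := by
        rw [Int.toNat_of_nonneg (by omega), sub_sub_cancel]
        exact hi0 i (le_of_max_le_left hi)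
      have : (c - l).toNat ≤ k i := Nat.le_findGreatest (by omega) hP
      show c - (k i : ℤ) ≤ l
      omega

/-- `Tendsto n atTop atBot` would be wrong here: in `WithBot ℤ` it forces `n i = ⊥`
eventually. -/
def IsAdmissibleExponent (n : ℤ → WithBot ℤ) : Prop :=
  (∃ c : ℤ, ∀ i, n i ≤ (c : WithBot ℤ)) ∧ ∀ l : ℤ, ∃ i0 : ℤ, ∀ i, i0 ≤ i → n i ≤ (l : WithBot ℤ)

section MixedSeminorm

variable {K} {q : ℕ}

theorem qpow_nonneg (q : ℕ) (n : WithBot ℤ) : 0 ≤ qpow q n := by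
  induction n using WithBot.recBotCoe with
  | bot => exact le_rfl
  | coe z => exact zpow_nonneg q.cast_nonneg z

theorem qpow_le_zpow (hq : 1 ≤ q) {n : WithBot ℤ} {c : ℤ} (h : n ≤ c) :
    qpow q n ≤ (q : ℝ) ^ c := by
  induction n using WithBot.recBotCoe with
  | bot => exact zpow_nonneg q.cast_nonneg c
  | coe z => exact zpow_le_zpow_right₀ (by exact_mod_cast hq) (WithBot.coe_le_coe.1 h)

theorem mul_qpow_le_zpow (hq : 1 ≤ q) {r : ℝ} {l k : ℤ} {n : WithBot ℤ}
    (hr : r ≤ (q : ℝ) ^ (-l)) (hn : n ≤ ((l + k : ℤ) : WithBot ℤ)) :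
    r * qpow q n ≤ (q : ℝ) ^ k := by
  have hq0 : (q : ℝ) ≠ 0 := by positivity
  calc r * qpow q n ≤ (q : ℝ) ^ (-l) * (q : ℝ) ^ (l + k) :=
        mul_le_mul hr (qpow_le_zpow hq hn) (qpow_nonneg q n) (zpow_nonneg q.cast_nonneg _)
    _ = (q : ℝ) ^ k := by rw [← zpow_add₀ hq0]; ring_nf

theorem bddAbove_norm_mul_qpow (hq : 1 ≤ q) {n : ℤ → WithBot ℤ}
    (hn : ∃ c : ℤ, ∀ i, n i ≤ (c : WithBot ℤ)) (f : Mt K) :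
    BddAbove {r : ℝ | ∃ i : ℤ, r = ‖f.1 i‖ * qpow q (n i)} := by
  obtain ⟨c, hc⟩ := hn
  obtain ⟨⟨C, hC⟩, -⟩ := f.2
  refine ⟨max C 0 * (q : ℝ) ^ c, ?_⟩
  rintro _ ⟨i, rfl⟩
  exact mul_le_mul ((hC i).trans (le_max_left C 0)) (qpow_le_zpow hq (hc i)) (qpow_nonneg q _)
    (le_max_right C 0)

theorem mixedSeminorm_le_iff (hq : 1 ≤ q) {n : ℤ → WithBot ℤ}
    (hn : ∃ c : ℤ, ∀ i, n i ≤ (c : WithBot ℤ)) {f : Mt K} {ε : ℝ} :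
    mixedSeminorm K q n f ≤ ε ↔ ∀ i, ‖f.1 i‖ * qpow q (n i) ≤ ε :=
  ⟨fun h i => (le_csSup (bddAbove_norm_mul_qpow hq hn f) ⟨i, rfl⟩).trans h,
    fun h => csSup_le ⟨_, 0, rfl⟩ (by rintro _ ⟨i, rfl⟩; exact h i)⟩

theorem mixedSeminorm_smul (c : K) (f : Mt K) (n : ℤ → WithBot ℤ) :
    mixedSeminorm K q n (c • f) = ‖c‖ * mixedSeminorm K q n f := by
  have hset : {r : ℝ | ∃ i : ℤ, r = ‖(c • f).1 i‖ * qpow q (n i)}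
      = ‖c‖ • {r : ℝ | ∃ i : ℤ, r = ‖f.1 i‖ * qpow q (n i)} := by
    ext r
    simp only [Set.mem_smul_set, Set.mem_ofPred_eq, smul_eq_mul]
    constructor
    · rintro ⟨i, rfl⟩
      exact ⟨_, ⟨i, rfl⟩, by simp [norm_mul, mul_assoc]⟩
    · rintro ⟨_, ⟨i, rfl⟩, rfl⟩
      exact ⟨i, by simp [norm_mul, mul_assoc]⟩
  rw [mixedSeminorm, hset, Real.sSup_smul_of_nonneg (norm_nonneg c), smul_eq_mul, mixedSeminorm]

variable [IsUltrametricDist K]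

theorem mixedSeminorm_add_le (hq : 1 ≤ q) {n : ℤ → WithBot ℤ}
    (hn : ∃ c : ℤ, ∀ i, n i ≤ (c : WithBot ℤ)) (f g : Mt K) :
    mixedSeminorm K q n (f + g) ≤ max (mixedSeminorm K q n f) (mixedSeminorm K q n g) := by
  refine (mixedSeminorm_le_iff hq hn).2 fun i => ?_
  calc ‖f.1 i + g.1 i‖ * qpow q (n i)
      ≤ max ‖f.1 i‖ ‖g.1 i‖ * qpow q (n i) :=
        mul_le_mul_of_nonneg_right (IsUltrametricDist.norm_add_le_max _ _) (qpow_nonneg q _)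
    _ = max (‖f.1 i‖ * qpow q (n i)) (‖g.1 i‖ * qpow q (n i)) :=
        max_mul_of_nonneg _ _ (qpow_nonneg q _)
    _ ≤ max (mixedSeminorm K q n f) (mixedSeminorm K q n g) :=
        max_le_max ((mixedSeminorm_le_iff hq hn).1 le_rfl i)
          ((mixedSeminorm_le_iff hq hn).1 le_rfl i)

theorem isSeminorm_mixedSeminorm (hq : 1 ≤ q) {n : ℤ → WithBot ℤ}
    (hn : ∃ c : ℤ, ∀ i, n i ≤ (c : WithBot ℤ)) : IsSeminorm K (mixedSeminorm K q n) :=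
  ⟨fun c f => mixedSeminorm_smul c f n, mixedSeminorm_add_le hq hn⟩

end MixedSeminorm

section MixedTopology

variable {K} {q : ℕ}

theorem univ_mem_mixedBasic : (Set.univ : Set (Mt K)) ∈ mixedBasic K q :=
  ⟨fun _ => Set.univ, fun _ => ⟨isOpen_univ, trivial⟩, ⟨0, fun _ => subset_univ _⟩,
    fun _ => ⟨0, fun _ _ => subset_univ _⟩, by ext f; simp⟩

theorem zero_mem_of_mem_mixedBasic {U : Set (Mt K)} (hU : U ∈ mixedBasic K q) :
    (0 : Mt K) ∈ U := by
  obtain ⟨Vs, hVs, -, -, rfl⟩ := hU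
  exact fun i => (hVs i).2

theorem inter_mem_mixedBasic (hq : 1 ≤ q) {U V : Set (Mt K)} (hU : U ∈ mixedBasic K q)
    (hV : V ∈ mixedBasic K q) : U ∩ V ∈ mixedBasic K q := by
  have hq' : (1 : ℝ) ≤ q := by exact_mod_cast hq
  obtain ⟨Vs, hVs, ⟨c, hc⟩, htail, rfl⟩ := hU
  obtain ⟨Ws, hWs, ⟨d, hd⟩, htail', rfl⟩ := hV
  refine ⟨fun i => Vs i ∩ Ws i, fun i => ⟨(hVs i).1.inter (hWs i).1, (hVs i).2, (hWs i).2⟩,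
    ⟨max c d, fun i x hx => ⟨hc i ?_, hd i ?_⟩⟩, fun l => ?_, by ext f; simp [forall_and]⟩
  · exact hx.trans (zpow_le_zpow_right₀ hq' (by omega))
  · exact hx.trans (zpow_le_zpow_right₀ hq' (by omega))
  · obtain ⟨i0, hi0⟩ := htail l
    obtain ⟨j0, hj0⟩ := htail' l
    exact ⟨max i0 j0, fun i hi x hx =>
      ⟨hi0 i (le_of_max_le_left hi) hx, hj0 i (le_of_max_le_right hi) hx⟩⟩

theorem exists_setOf_mixedSeminorm_le_one_subset (hq : 1 < q) {U : Set (Mt K)}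
    (hU : U ∈ mixedBasic K q) :
    ∃ n, IsAdmissibleExponent n ∧ {f : Mt K | mixedSeminorm K q n f ≤ 1} ⊆ U := by
  obtain ⟨Vs, -, ⟨c, hc⟩, htail, rfl⟩ := hU
  obtain ⟨m, hm, hmt⟩ := exists_bdd_tendsto_atBot_of_forall_eventually
    (P := fun i l => {x : K | ‖x‖ ≤ (q : ℝ) ^ (-l)} ⊆ Vs i) hc
    fun l => eventually_atTop.2 (htail l)
  have hbdd : ∃ c : ℤ, ∀ i, ((m i : ℤ) : WithBot ℤ) ≤ c :=
    ⟨c, fun i => WithBot.coe_le_coe.2 (hm i).1⟩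
  refine ⟨fun i => m i, ⟨hbdd, fun l => ?_⟩, fun f hf i => (hm i).2 ?_⟩
  · obtain ⟨i0, hi0⟩ := tendsto_atTop_atBot.1 hmt l
    exact ⟨i0, fun i hi => WithBot.coe_le_coe.2 (hi0 i hi)⟩
  · have h : ‖f.1 i‖ * (q : ℝ) ^ m i ≤ 1 := (mixedSeminorm_le_iff hq.le hbdd).1 hf i
    rwa [← le_div_iff₀ (zpow_pos (Nat.cast_pos.2 (by omega)) _), one_div, ← zpow_neg] at h

variable [IsUltrametricDist K]

theorem setOf_mixedSeminorm_le_mem_mixedBasic (hq : 1 < q) {n : ℤ → WithBot ℤ}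
    (hn : IsAdmissibleExponent n) {ε : ℝ} (hε : 0 < ε) :
    {f : Mt K | mixedSeminorm K q n f ≤ ε} ∈ mixedBasic K q := by
  obtain ⟨k, hk, -⟩ := exists_mem_Ioc_zpow hε (by exact_mod_cast hq : (1 : ℝ) < q)
  obtain ⟨c, hc⟩ := hn.1
  refine ⟨fun i => {x : K | ‖x‖ * qpow q (n i) ≤ ε},
    fun i => ⟨isOpen_setOf_norm_mul_le (qpow_nonneg q _) hε, by simp [hε.le]⟩,
    ⟨c - k, fun i x hx => ?_⟩, fun l => ?_, Set.ext fun f => mixedSeminorm_le_iff hq.le hn.1⟩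
  · exact (mul_qpow_le_zpow hq.le hx (by rw [sub_add_cancel]; exact hc i)).trans hk.le
  · obtain ⟨i0, hi0⟩ := hn.2 (l + k)
    exact ⟨i0, fun i hi x hx => (mul_qpow_le_zpow hq.le hx (hi0 i hi)).trans hk.le⟩

theorem exists_add_subset_of_mem_mixedBasic (hq : 1 < q) {U : Set (Mt K)}
    (hU : U ∈ mixedBasic K q) : ∃ V ∈ mixedBasic K q, V + V ⊆ U := by
  obtain ⟨n, hn, hnU⟩ := exists_setOf_mixedSeminorm_le_one_subset hq hU
  refine ⟨_, setOf_mixedSeminorm_le_mem_mixedBasic hq hn one_pos, ?_⟩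
  rintro _ ⟨f, hf, g, hg, rfl⟩
  exact hnU ((mixedSeminorm_add_le hq.le hn.1 f g).trans (max_le hf hg))

theorem mem_nhds_zero_mixedTop (hq : 1 < q) {S : Set (Mt K)} :
    S ∈ @nhds _ (mixedTop K q) 0 ↔ ∃ U ∈ mixedBasic K q, U ⊆ S :=
  mem_nhds_zero_addTopologyOf ⟨_, univ_mem_mixedBasic⟩
    (fun _ hU _ hV => inter_mem_mixedBasic hq.le hU hV)
    (fun _ => zero_mem_of_mem_mixedBasic) (fun _ => exists_add_subset_of_mem_mixedBasic hq)

end MixedTopology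

/-- For any sequence `(n_i) ⊆ ℤ ∪ {-∞}` bounded above with `n_i → -∞` as
`i → ∞`, the map `‖Σ x_i t^i‖ = sup_i ‖x_i‖ q^{n_i}` is a well-defined seminorm on `K{{t}}`
(the supremum exists), and the higher topology on `K{{t}}` is exactly the locally convex
topology generated by the family of all such seminorms. -/
theorem statement5 (q : ℕ) (hK : IsCharZeroLocalField K q) :
    (∀ n : ℤ → WithBot ℤ,
      (∃ c : ℤ, ∀ i : ℤ, n i ≤ (c : WithBot ℤ)) →
      (∀ l : ℤ, ∃ i0 : ℤ, ∀ i : ℤ, i0 ≤ i → n i ≤ (l : WithBot ℤ)) →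
      (∀ f : Mt K, (Set.Nonempty {r : ℝ | ∃ i : ℤ, r = ‖f.1 i‖ * qpow q (n i)} ∧
        BddAbove {r : ℝ | ∃ i : ℤ, r = ‖f.1 i‖ * qpow q (n i)})) ∧
      IsSeminorm K (mixedSeminorm K q n)) ∧
    (∀ S : Set (Mt K),
      S ∈ @nhds _ (mixedTop K q) 0 ↔
        ∃ (m : ℕ) (ns : Fin m → ℤ → WithBot ℤ) (ε : ℝ), 0 < ε ∧
          (∀ j, (∃ c : ℤ, ∀ i : ℤ, ns j i ≤ (c : WithBot ℤ)) ∧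
            (∀ l : ℤ, ∃ i0 : ℤ, ∀ i : ℤ, i0 ≤ i → ns j i ≤ (l : WithBot ℤ))) ∧
          {f : Mt K | ∀ j, mixedSeminorm K q (ns j) f ≤ ε} ⊆ S) := by
  have hq : 1 < q := hK.one_lt_q
  have : IsUltrametricDist K :=
    IsUltrametricDist.isUltrametricDist_of_forall_norm_add_le_max_norm hK.nonarch
  refine ⟨fun n hn _ => ⟨fun f => ⟨⟨_, 0, rfl⟩, bddAbove_norm_mul_qpow hq.le hn f⟩,
    isSeminorm_mixedSeminorm hq.le hn⟩, fun S => ⟨fun hS => ?_, fun hS => ?_⟩⟩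
  · obtain ⟨U, hU, hUS⟩ := (mem_nhds_zero_mixedTop hq).1 hS
    obtain ⟨n, hn, hnU⟩ := exists_setOf_mixedSeminorm_le_one_subset hq hU
    exact ⟨1, fun _ => n, 1, one_pos, fun _ => hn, fun f hf => hUS (hnU (hf 0))⟩
  · obtain ⟨m, ns, ε, hε, hns, hsub⟩ := hS
    have hball : ∀ j, {f : Mt K | mixedSeminorm K q (ns j) f ≤ ε} ∈ @nhds _ (mixedTop K q) 0 :=
      fun j => (mem_nhds_zero_mixedTop hq).2
        ⟨_, setOf_mixedSeminorm_le_mem_mixedBasic hq (hns j) hε, subset_rfl⟩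
    exact mem_of_superset (iInter_mem.2 hball) fun f hf => hsub fun j => mem_iInter.1 hf j

end TwoDimLF
end
end

section
/- Every basic bounded 𝒪-submodule B = Σ_{i∈ℤ} 𝔭^{k_i} t^i of K((t)), where (k_i)_{i∈ℤ} ⊂ ℤ ∪ {∞} and k_i = ∞ for all i below some index i_0, is both compactoid and c-compact for the higher topology. -/
/-!
Common setting: `K` is a characteristic-zero local field (a finite extension of `ℚ_p`)
with ring of integers `𝒪 = {c : K | ‖c‖ ≤ 1}`, maximal ideal `𝔭 = {c : K | ‖c‖ < 1}`,
residue field of cardinality `q` and the absolute value normalised by `‖π‖ = q⁻¹`.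
We formalise the two-dimensional local fields `K((t))` (as `LaurentSeries K`) and
`K{{t}}` (as the submodule `mixedCarrier K` of `ℤ → K`), their higher topologies, and
the relevant functional-analytic notions (lattices, seminorms, boundedness,
c-compactness, compactoidness, completeness for nets, duality).
-/

open Filter Topology Set Pointwise
open scoped Classical

noncomputable section

namespace TwoDimLF

variable (K : Type) [NontriviallyNormedField K]

/-!
Elements of `B` vanish below `i0`, and a basic neighbourhood of zero in the higher topology
constrains only the coefficients below some `N`. Hence `B` lies in such a neighbourhood plus the
finitely many lines `𝒪 a_i t^i`, `i0 ≤ i < N`: it is compactoid. For c-compactness, `B` is the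
image of the compact product `∏_i 𝔭^{k_i}`, and for an open lattice `Λ` the coefficient families
`g` with `Σ g_i t^i ∈ y + Λ` form a union of cosets of a product-open neighbourhood, hence a closed
set; a compatible family `(x_j)` then has a limit by the finite intersection property.
-/

section

variable {K}

lemma zero_mem_pT (q : ℕ) (n : WithTop ℤ) : (0 : K) ∈ pT K q n := by
  induction n using WithTop.recTopCoe with
  | top => exact rfl
  | coe m => show ‖(0 : K)‖ ≤ (q : ℝ) ^ (-m); simp [zpow_nonneg]

lemma pT_coe_eq_closedBall (q : ℕ) (m : ℤ) :
    pT K q (m : ℤ) = Metric.closedBall (0 : K) ((q : ℝ) ^ (-m)) := by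
  ext x
  simp [pT]

lemma isCompact_pT [ProperSpace K] (q : ℕ) (n : WithTop ℤ) : IsCompact (pT K q n) := by
  induction n using WithTop.recTopCoe with
  | top => exact isCompact_singleton
  | coe m => exact pT_coe_eq_closedBall (K := K) q m ▸ isCompact_closedBall _ _

lemma exists_norm_div_le_one_of_isBounded {s : Set K} (hs : Bornology.IsBounded s) :
    ∃ a : K, a ≠ 0 ∧ ∀ x ∈ s, ‖x / a‖ ≤ 1 := by
  obtain ⟨R, hR⟩ := hs.subset_closedBall 0
  obtain ⟨a, ha⟩ := NormedField.exists_lt_norm K (max R 0)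
  have ha0 : 0 < ‖a‖ := (le_max_right R 0).trans_lt ha
  refine ⟨a, norm_pos_iff.mp ha0, fun x hx => ?_⟩
  rw [norm_div, div_le_one ha0]
  exact (mem_closedBall_zero_iff.mp (hR hx)).trans ((le_max_left R 0).trans ha.le)

lemma isBounded_pT (q : ℕ) (n : WithTop ℤ) : Bornology.IsBounded (pT K q n) := by
  induction n using WithTop.recTopCoe with
  | top => exact Bornology.isBounded_singleton
  | coe m => exact pT_coe_eq_closedBall (K := K) q m ▸ Metric.isBounded_closedBall

section OSubmodule

variable {V : Type} [AddCommGroup V] [Module K V] {S : Set V}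

lemma IsOSubmodule.neg_mem (hS : IsOSubmodule K S) {a : V} (ha : a ∈ S) : -a ∈ S := by
  simpa using hS.2.2 (-1) (by simp) a ha

lemma IsOSubmodule.sub_mem (hS : IsOSubmodule K S) {a b : V} (ha : a ∈ S) (hb : b ∈ S) :
    a - b ∈ S := by
  simpa [sub_eq_add_neg] using hS.2.1 a ha (-b) (hS.neg_mem hb)

lemma isCompactoid_of_exists_finset {ι : Type*} (τ : TopologicalSpace V) (A : Set V)
    (h : ∀ Λ : Set V, IsLatticeSet K Λ → IsOpen[τ] Λ → ∃ (s : Finset ι) (v : ι → V),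
      ∀ a ∈ A, ∃ l ∈ Λ, ∃ c : ι → K, (∀ i ∈ s, ‖c i‖ ≤ 1) ∧ a = l + ∑ i ∈ s, c i • v i) :
    IsCompactoid K τ A := by
  intro Λ hΛ hΛo
  obtain ⟨s, v, hv⟩ := h Λ hΛ hΛo
  set e := s.equivFin
  refine ⟨s.card, fun j => v (e.symm j), fun a ha => ?_⟩
  obtain ⟨l, hl, c, hc, rfl⟩ := hv a ha
  refine ⟨l, hl, fun j => c (e.symm j), fun j => hc _ (e.symm j).2, ?_⟩
  rw [e.symm.sum_comp (fun i : s => c i • v i), Finset.sum_coe_sort s (fun i => c i • v i)]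

theorem isCCompact_image {X : Type*} [TopologicalSpace X] (τ : TopologicalSpace V)
    {C : Set X} (hC : IsCompact C) (hC0 : C.Nonempty) (φ : X → V)
    (hφ : ∀ Λ : Set V, IsOSubmodule K Λ → IsOpen[τ] Λ → ∀ y, IsClosed {g | φ g - y ∈ Λ}) :
    IsCCompact K τ (φ '' C) := by
  intro ι L hL hdir x hx hcompat
  cases isEmpty_or_nonempty ι with
  | inl hι => exact ⟨_, Set.mem_image_of_mem φ hC0.some_mem, isEmptyElim⟩
  | inr hι =>
    set t : ι → Set X := fun i => {g | φ g - x i ∈ L i}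
    have ht_anti : ∀ i j, L j ⊆ L i → t j ⊆ t i := fun i j hij g (hg : φ g - x j ∈ L j) => by
      show φ g - x i ∈ L i
      simpa using (hL i).1.1.2.1 _ (hij hg) _ (hcompat i j hij)
    have ht_dir : Directed (· ⊇ ·) t := fun i j => by
      obtain ⟨l, hli, hlj⟩ := hdir i j
      exact ⟨l, ht_anti i l hli, ht_anti j l hlj⟩
    have hCt : ∀ i, (C ∩ t i).Nonempty := fun i => by
      obtain ⟨g, hg, hgx⟩ := hx i
      exact ⟨g, hg, by simpa [t, hgx] using (hL i).1.1.1⟩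
    obtain ⟨g, hg, hgt⟩ : (C ∩ ⋂ i, t i).Nonempty := by
      by_contra hempty
      obtain ⟨i, hi⟩ := hC.elim_directed_family_closed t (fun i => hφ _ (hL i).1.1 (hL i).2 _)
        (Set.not_nonempty_iff_eq_empty.mp hempty) ht_dir
      exact (hCt i).ne_empty hi
    exact ⟨φ g, Set.mem_image_of_mem φ hg, Set.mem_iInter.mp hgt⟩

end OSubmodule

lemma exists_coeff_nhd_subset {Λ : Set (LaurentSeries K)} (h0 : (0 : LaurentSeries K) ∈ Λ)
    (hΛ : IsOpen[laurentTop K] Λ) :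
    ∃ U : ℤ → Set K, (∀ i, IsOpen (U i) ∧ (0 : K) ∈ U i) ∧
      (∃ N : ℤ, ∀ i, N ≤ i → U i = Set.univ) ∧
      {f : LaurentSeries K | ∀ i, f.coeff i ∈ U i} ⊆ Λ := by
  have h : Λ ∈ ⨅ S ∈ laurentBasic K, Filter.principal S := by simpa using hΛ 0 h0
  have hdir : DirectedOn ((fun S => Filter.principal S) ⁻¹'o (· ≥ ·)) (laurentBasic K) := by
    rintro _ ⟨U₁, hU₁, ⟨N₁, hN₁⟩, rfl⟩ _ ⟨U₂, hU₂, ⟨N₂, hN₂⟩, rfl⟩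
    refine ⟨_, ⟨fun i => U₁ i ∩ U₂ i, fun i => ⟨(hU₁ i).1.inter (hU₂ i).1, (hU₁ i).2, (hU₂ i).2⟩,
      ⟨max N₁ N₂, fun i hi => ?_⟩, rfl⟩,
      Filter.principal_mono.mpr fun f hf i => (hf i).1,
      Filter.principal_mono.mpr fun f hf i => (hf i).2⟩
    simp [hN₁ i (le_of_max_le_left hi), hN₂ i (le_of_max_le_right hi)]
  have hne : (laurentBasic K).Nonempty :=
    ⟨_, fun _ => Set.univ, fun _ => ⟨isOpen_univ, trivial⟩, ⟨0, fun _ _ => rfl⟩, rfl⟩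
  obtain ⟨_, ⟨U, hU, hN, rfl⟩, hmem⟩ := (Filter.mem_biInf_of_directed hdir hne).mp h
  exact ⟨U, hU, hN, Filter.mem_principal.mp hmem⟩

theorem isCompactoid_laurentPT (q : ℕ) {k : ℤ → WithTop ℤ} {i0 : ℤ}
    (hk : ∀ i, i < i0 → k i = ⊤) : IsCompactoid K (laurentTop K) (laurentPT K q k) := by
  choose a ha0 ha using fun i =>
    exists_norm_div_le_one_of_isBounded (isBounded_pT (K := K) q (k i))
  refine isCompactoid_of_exists_finset (ι := ℤ) _ _ fun Λ hΛ hΛo => ?_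
  obtain ⟨U, hU, ⟨N, hN⟩, hUΛ⟩ := exists_coeff_nhd_subset hΛ.1.1 hΛo
  refine ⟨Finset.Ico i0 N, fun i => HahnSeries.single i (a i), fun f hf => ?_⟩
  have hsum : ∀ n, (∑ i ∈ Finset.Ico i0 N, (f.coeff i / a i) • HahnSeries.single i (a i)).coeff n
      = if n ∈ Finset.Ico i0 N then f.coeff n else 0 := fun n => by
    simp [HahnSeries.coeff_sum, HahnSeries.coeff_single, div_mul_cancel₀ _ (ha0 _)]
  refine ⟨_, hUΛ fun n => ?_, fun i => f.coeff i / a i, fun i _ => ha i _ (hf i),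
    (sub_add_cancel _ _).symm⟩
  rw [HahnSeries.coeff_sub, hsum]
  by_cases hNn : N ≤ n
  · simp [hN n hNn]
  by_cases hn : i0 ≤ n
  · simpa [hn, not_le.mp hNn] using (hU n).2
  · have hf0 : f.coeff n = 0 := by simpa [hk n (not_le.mp hn), pT] using hf n
    simpa [hf0] using (hU n).2

def seriesFrom (i0 : ℤ) (g : ℤ → K) : LaurentSeries K :=
  HahnSeries.ofSuppBddBelow ((Set.Ici i0).indicator g)
    (bddBelow_Ici.mono Set.support_indicator_subset)

lemma seriesFrom_coeff (i0 : ℤ) (g : ℤ → K) (n : ℤ) :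
    (seriesFrom i0 g).coeff n = if i0 ≤ n then g n else 0 := by
  simp [seriesFrom, Set.indicator_apply]

lemma eventually_seriesFrom_sub_mem {L : Set (LaurentSeries K)}
    (hL0 : (0 : LaurentSeries K) ∈ L) (hLo : IsOpen[laurentTop K] L) (i0 : ℤ) (g : ℤ → K) :
    ∀ᶠ h in 𝓝 g, seriesFrom i0 h - seriesFrom i0 g ∈ L := by
  obtain ⟨U, hU, ⟨N, hN⟩, hUL⟩ := exists_coeff_nhd_subset hL0 hLo
  have hnear : ∀ᶠ h in 𝓝 g, ∀ n ∈ Finset.Ico i0 N, h n - g n ∈ U n := by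
    refine (Finset.eventually_all _).mpr fun n _ => ?_
    have hcont : Tendsto (fun h : ℤ → K => h n - g n) (𝓝 g) (𝓝 0) := by
      simpa using ((continuous_apply n).tendsto g).sub_const (g n)
    exact hcont.eventually ((hU n).1.mem_nhds (hU n).2)
  filter_upwards [hnear] with h hh
  refine hUL fun n => ?_
  rw [HahnSeries.coeff_sub, seriesFrom_coeff, seriesFrom_coeff]
  by_cases hNn : N ≤ n
  · simp [hN n hNn]
  by_cases hn : i0 ≤ n
  · simpa [hn] using hh n (Finset.mem_Ico.mpr ⟨hn, not_le.mp hNn⟩)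
  · simpa [hn] using (hU n).2

lemma isClosed_setOf_seriesFrom_sub_mem {L : Set (LaurentSeries K)} (hL : IsOSubmodule K L)
    (hLo : IsOpen[laurentTop K] L) (i0 : ℤ) (y : LaurentSeries K) :
    IsClosed {g : ℤ → K | seriesFrom i0 g - y ∈ L} := by
  refine isOpen_compl_iff.mp (isOpen_iff_mem_nhds.mpr fun g hg => ?_)
  filter_upwards [eventually_seriesFrom_sub_mem hL.1 hLo i0 g] with h hh hhy
  exact hg (by simpa using hL.sub_mem hhy hh)

lemma laurentPT_eq_image_seriesFrom (q : ℕ) {k : ℤ → WithTop ℤ} {i0 : ℤ}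
    (hk : ∀ i, i < i0 → k i = ⊤) :
    laurentPT K q k = seriesFrom i0 '' Set.univ.pi (fun n => pT K q (k n)) := by
  ext f
  constructor
  · intro hf
    refine ⟨f.coeff, fun n _ => hf n, HahnSeries.ext (funext fun n => ?_)⟩
    rw [seriesFrom_coeff]
    split_ifs with hn
    · rfl
    · simpa [hk n (not_le.mp hn), pT, eq_comm] using hf n
  · rintro ⟨g, hg, rfl⟩ n
    rw [seriesFrom_coeff]
    split_ifs
    exacts [hg n trivial, zero_mem_pT q (k n)]

theorem isCCompact_laurentPT [ProperSpace K] (q : ℕ) {k : ℤ → WithTop ℤ} {i0 : ℤ}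
    (hk : ∀ i, i < i0 → k i = ⊤) : IsCCompact K (laurentTop K) (laurentPT K q k) := by
  rw [laurentPT_eq_image_seriesFrom q hk]
  exact isCCompact_image _ (isCompact_univ_pi fun n => isCompact_pT q (k n))
    ⟨0, fun n _ => zero_mem_pT q (k n)⟩ _
    fun _ hL hLo y => isClosed_setOf_seriesFrom_sub_mem hL hLo i0 y

end

/-- Every basic bounded `𝒪`-submodule `B = Σ_{i∈ℤ} 𝔭^{k_i} t^i` of
`K((t))`, where `(k_i) ⊆ ℤ ∪ {∞}` and `k_i = ∞` for all `i` below some index `i0`, is both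
compactoid and c-compact for the higher topology. -/
theorem statement14 (q : ℕ) (hK : IsCharZeroLocalField K q)
    (k : ℤ → WithTop ℤ) (hk : ∃ i0 : ℤ, ∀ i : ℤ, i < i0 → k i = ⊤) :
    IsCompactoid K (laurentTop K) (laurentPT K q k) ∧
    IsCCompact K (laurentTop K) (laurentPT K q k) := by
  obtain ⟨i0, hi0⟩ := hk
  have := hK.locallyCompact
  have := ProperSpace.of_nontriviallyNormedField_of_weaklyLocallyCompactSpace K
  exact ⟨isCompactoid_laurentPT q hi0, isCCompact_laurentPT q hi0⟩

end TwoDimLF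
end
end
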